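/- Let H be a finite-dimensional Hopf algebra with bijective antipode S. For all h, t ∈ H and α ∈ H*, ((h ⇁' S(h') ) compatibility): α₂ ⇁' S(h₁) ⊗ α₁ ⇁' h₂ = ⟨α, 1⟩ S(h₁) ⊗ h₂ in H ⊗ H, where α ⇁' u = ⟨α, S⁻¹(u₁)⟩ u₂. -/

import Mathlib

/-!
Since `S` is an anti-coalgebra map and `S⁻¹ ∘ S = id`, `α₂ ⇁' S(h₁) = ⟨α₂, h₁₂⟩ S(h₁₁)`, so by
coassociativity the left-hand side is `⟨α, S⁻¹(h₃) h₂⟩ S(h₁) ⊗ h₄`. As `S⁻¹` is an antipode for the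
co-opposite coalgebra, the middle pairing contracts to `ε(h₂) ⟨α, 1⟩`, leaving `⟨α, 1⟩ S(h₁) ⊗ h₂`.
Anti-comultiplicativity of `S` comes from the same kind of contraction: `(S ⊗ S) ∘ τ ∘ Δ` is a left
convolution inverse of `Δ`, whose right inverse is `Δ ∘ S`.
-/

open TensorProduct

/-- The action `⇁'` of `H*` on `H`: `α ⇁' u = ⟨α, S⁻¹(u₁)⟩ u₂`. -/
noncomputable def lAct' {k H : Type*} [CommSemiring k] [Semiring H] [HopfAlgebra k H]
    (Sinv : H →ₗ[k] H) (α : Module.Dual k H) : H →ₗ[k] H :=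
  (TensorProduct.lid k H).toLinearMap ∘ₗ
    (TensorProduct.map (α ∘ₗ Sinv) LinearMap.id) ∘ₗ (Coalgebra.comul (R := k))

open Coalgebra LinearMap WithConv

section MiddleContract

variable {R C N : Type*} [CommSemiring R] [AddCommMonoid C] [Module R C]
  [AddCommMonoid N] [Module R N]

noncomputable def middleContract (κ : C ⊗[R] C →ₗ[R] N) :
    (C ⊗[R] C) ⊗[R] (C ⊗[R] C) →ₗ[R] C ⊗[R] (N ⊗[R] C) :=
  lTensor C (rTensor C κ ∘ₗ (TensorProduct.assoc R C C C).symm.toLinearMap) ∘ₗ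
    (TensorProduct.assoc R C C (C ⊗[R] C)).toLinearMap

@[simp]
lemma middleContract_tmul (κ : C ⊗[R] C →ₗ[R] N) (a b c d : C) :
    middleContract κ ((a ⊗ₜ b) ⊗ₜ (c ⊗ₜ d)) = a ⊗ₜ (κ (b ⊗ₜ c) ⊗ₜ d) := rfl

variable [Coalgebra R C]

lemma middleContract_comp_map_comul_comp_comul (κ : C ⊗[R] C →ₗ[R] N) :
    middleContract κ ∘ₗ map comul comul ∘ₗ comul =
      lTensor C (rTensor C (κ ∘ₗ comul) ∘ₗ comul) ∘ₗ (comul (R := R) (A := C)) := by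
  simp only [middleContract, coassoc_simps]

lemma middleContract_map_comul_comul_comul {κ : C ⊗[R] C →ₗ[R] N} {n : N}
    (hκ : ∀ c, κ (comul c) = counit (R := R) c • n) (a : C) :
    middleContract κ (map comul comul (comul a)) =
      lTensor C (TensorProduct.mk R N C n) (comul a) := by
  have hκn : rTensor C (κ ∘ₗ comul) ∘ₗ comul = TensorProduct.mk R N C n := by
    have : κ ∘ₗ comul = toSpanSingleton R N n ∘ₗ counit := by ext c; simp [hκ]
    rw [this, rTensor_comp, comp_assoc, rTensor_counit_comp_comul]
    ext c; simp
  have := middleContract_comp_map_comul_comp_comul κ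
  rw [hκn] at this
  exact congr($this a)

end MiddleContract

namespace HopfAlgebra

variable {R A : Type*} [CommSemiring R] [Semiring A] [HopfAlgebra R A]

local notation "𝑺" => antipode R (A := A)

lemma map_antipode_comp_comm_comp_comul_convMul_comul :
    toConv (map 𝑺 𝑺 ∘ₗ (TensorProduct.comm R A A).toLinearMap ∘ₗ comul) * toConv comul =
      (1 : WithConv (A →ₗ[R] A ⊗[R] A)) := by
  let κ : A ⊗[R] A →ₗ[R] A := mul' R A ∘ₗ rTensor A 𝑺
  have hκ (c : A) : κ (comul c) = counit (R := R) c • 1 := by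
    simp [κ, Algebra.algebraMap_eq_smul_one]
  have hmul : mul' R (A ⊗[R] A) ∘ₗ map (map 𝑺 𝑺 ∘ₗ (TensorProduct.comm R A A).toLinearMap) id =
      lTensor A κ ∘ₗ (TensorProduct.leftComm R A A A).toLinearMap ∘ₗ middleContract κ := by
    ext a b c d; simp [κ]
  have hone : lTensor A κ ∘ₗ (TensorProduct.leftComm R A A A).toLinearMap ∘ₗ
      lTensor A (TensorProduct.mk R A A 1) = TensorProduct.mk R A A 1 ∘ₗ κ := by
    ext b c; simp
  ext a
  calc mul' R (A ⊗[R] A)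
        (map (map 𝑺 𝑺 ∘ₗ (TensorProduct.comm R A A).toLinearMap ∘ₗ comul) comul (comul a))
      = (mul' R (A ⊗[R] A) ∘ₗ map (map 𝑺 𝑺 ∘ₗ (TensorProduct.comm R A A).toLinearMap) id)
          (map comul comul (comul a)) := by
        rw [comp_apply, TensorProduct.map_map, id_comp]; rfl
    _ = lTensor A κ (TensorProduct.leftComm R A A A
          (lTensor A (TensorProduct.mk R A A 1) (comul a))) := by
        rw [hmul, comp_apply, comp_apply, middleContract_map_comul_comul_comul hκ]; rfl
    _ = 1 ⊗ₜ κ (comul a) := congr($hone (comul a))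
    _ = _ := by simp [hκ, Algebra.algebraMap_eq_smul_one, Algebra.TensorProduct.one_def]

theorem comul_antipode (a : A) :
    comul (R := R) (𝑺 a) = map 𝑺 𝑺 (TensorProduct.comm R A A (comul a)) := by
  have := left_inv_eq_right_inv (map_antipode_comp_comm_comp_comul_convMul_comul (R := R) (A := A))
    comul_right_inv
  exact congr($this a).symm

end HopfAlgebra

section Action

variable {k H : Type*} [CommSemiring k] [Semiring H] [HopfAlgebra k H] (Sinv : H →ₗ[k] H)

lemma lAct'_eq_sum (β : Module.Dual k H) {u : H} {ι : Type*} (r : Repr k u ι) :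
    lAct' Sinv β u = ∑ p ∈ r.index, β (Sinv (r.left p)) • r.right p := by
  simp [lAct', ← r.eq, map_sum]

lemma lAct'_antipode_eq_sum (hS1 : ∀ x, Sinv (HopfAlgebra.antipode k x) = x)
    (β : Module.Dual k H) {x : H} {ι : Type*} (r : Repr k x ι) :
    lAct' Sinv β (HopfAlgebra.antipode k x) =
      ∑ p ∈ r.index, β (r.right p) • HopfAlgebra.antipode k (r.left p) := by
  simp [lAct', HopfAlgebra.comul_antipode, ← r.eq, map_sum, hS1]

noncomputable def invAntipodePairing (α : Module.Dual k H) : H ⊗[k] H →ₗ[k] k :=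
  α ∘ₗ mul' k H ∘ₗ rTensor H Sinv ∘ₗ (TensorProduct.comm k H H).toLinearMap

@[simp]
lemma invAntipodePairing_tmul (α : Module.Dual k H) (b c : H) :
    invAntipodePairing Sinv α (b ⊗ₜ c) = α (Sinv c * b) := rfl

lemma invAntipodePairing_comul (hS1 : ∀ x, Sinv (HopfAlgebra.antipode k x) = x)
    (hS2 : ∀ x, HopfAlgebra.antipode k (Sinv x) = x) (α : Module.Dual k H) (c : H) :
    invAntipodePairing Sinv α (comul c) = counit (R := k) c • α 1 := by
  have hmul : mul' k H ∘ₗ rTensor H Sinv ∘ₗ (TensorProduct.comm k H H).toLinearMap =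
      Sinv ∘ₗ mul' k H ∘ₗ rTensor H (HopfAlgebra.antipode k) := by
    ext x y
    simpa [hS2, HopfAlgebra.antipode_mul_antidistrib] using (hS1 (Sinv y * x)).symm
  have hone : Sinv 1 = 1 := by simpa using hS1 1
  change α ((mul' k H ∘ₗ rTensor H Sinv ∘ₗ (TensorProduct.comm k H H).toLinearMap) (comul c)) = _
  simp [hmul, Algebra.algebraMap_eq_smul_one, hone]

lemma sum_lAct'_antipode_tmul_lAct' (hS1 : ∀ x, Sinv (HopfAlgebra.antipode k x) = x)
    {κ : Type*} [Fintype κ] (α : Module.Dual k H) (αA αB : κ → Module.Dual k H)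
    (hΔα : ∀ x y : H, α (x * y) = ∑ j, αA j x * αB j y) (x y : H) :
    ∑ j, lAct' Sinv (αB j) (HopfAlgebra.antipode k x) ⊗ₜ lAct' Sinv (αA j) y =
      map (HopfAlgebra.antipode k) id (lTensor H (TensorProduct.lid k H)
        (middleContract (invAntipodePairing Sinv α) (comul x ⊗ₜ comul y))) := by
  rw [← (ℛ k x).eq, ← (ℛ k y).eq]
  simp only [lAct'_antipode_eq_sum Sinv hS1 _ (ℛ k x), lAct'_eq_sum Sinv _ (ℛ k y), sum_tmul,
    tmul_sum, map_sum, middleContract_tmul, invAntipodePairing_tmul, hΔα]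
  rw [Finset.sum_comm]
  refine Finset.sum_congr rfl fun q _ => ?_
  rw [Finset.sum_comm]
  refine Finset.sum_congr rfl fun p _ => ?_
  simp [smul_tmul', tmul_smul, smul_smul, mul_comm]

end Action

theorem stmt10_general {k H : Type*} [Field k] [Ring H] [HopfAlgebra k H]
    (Sinv : H →ₗ[k] H)
    (hS1 : ∀ x, Sinv ((HopfAlgebra.antipode (R := k) : H →ₗ[k] H) x) = x)
    (hS2 : ∀ x, (HopfAlgebra.antipode (R := k) : H →ₗ[k] H) (Sinv x) = x)
    (h : H) (α : Module.Dual k H)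
    (ι : Type) [Fintype ι] (h1 h2 : ι → H)
    (hΔ : Coalgebra.comul (R := k) h = ∑ i, h1 i ⊗ₜ[k] h2 i)
    (κ : Type) [Fintype κ] (αA αB : κ → Module.Dual k H)
    (hΔα : ∀ x y : H, α (x * y) = ∑ j, αA j x * αB j y) :
    ∑ i, ∑ j,
        (lAct' Sinv (αB j) ((HopfAlgebra.antipode (R := k) : H →ₗ[k] H) (h1 i)))
          ⊗ₜ[k] (lAct' Sinv (αA j) (h2 i))
      = α 1 • ∑ i, ((HopfAlgebra.antipode (R := k) : H →ₗ[k] H) (h1 i)) ⊗ₜ[k] h2 i := by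
  calc _ = map (HopfAlgebra.antipode k) id (lTensor H (TensorProduct.lid k H)
        (middleContract (invAntipodePairing Sinv α) (map comul comul (comul h)))) := by
        simp only [sum_lAct'_antipode_tmul_lAct' Sinv hS1 α αA αB hΔα, hΔ, map_sum, map_tmul]
    _ = map (HopfAlgebra.antipode k) id (lTensor H (TensorProduct.lid k H)
        (lTensor H (TensorProduct.mk k k H (α 1)) (comul h))) := by
        rw [middleContract_map_comul_comul_comul (invAntipodePairing_comul Sinv hS1 hS2 α)]
    _ = _ := by simp [hΔ, Finset.smul_sum, tmul_smul]

/-- `α₂ ⇁' S(h₁) ⊗ α₁ ⇁' h₂ = ⟨α, 1⟩ S(h₁) ⊗ h₂` in `H ⊗ H`. -/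
theorem stmt10 {k H : Type*} [Field k] [Ring H] [HopfAlgebra k H] [FiniteDimensional k H]
    (Sinv : H →ₗ[k] H)
    (hS1 : ∀ x, Sinv ((HopfAlgebra.antipode (R := k) : H →ₗ[k] H) x) = x)
    (hS2 : ∀ x, (HopfAlgebra.antipode (R := k) : H →ₗ[k] H) (Sinv x) = x)
    (h : H) (α : Module.Dual k H)
    (ι : Type) [Fintype ι] (h1 h2 : ι → H)
    (hΔ : Coalgebra.comul (R := k) h = ∑ i, h1 i ⊗ₜ[k] h2 i)
    (κ : Type) [Fintype κ] (αA αB : κ → Module.Dual k H)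
    (hΔα : ∀ x y : H, α (x * y) = ∑ j, αA j x * αB j y) :
    ∑ i, ∑ j,
        (lAct' Sinv (αB j) ((HopfAlgebra.antipode (R := k) : H →ₗ[k] H) (h1 i)))
          ⊗ₜ[k] (lAct' Sinv (αA j) (h2 i))
      = α 1 • ∑ i, ((HopfAlgebra.antipode (R := k) : H →ₗ[k] H) (h1 i)) ⊗ₜ[k] h2 i :=
  stmt10_general Sinv hS1 hS2 h α ι h1 h2 hΔ κ αA αB hΔα
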